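/- Let 2 < p < ∞, 1 ≤ α ≤ 2, and suppose u ∈ W^{1,∞}(Ω) ∩ W^{2,α}(Ω) with ‖∇(u - P_h u)‖_{0,α} ≤ C h and with |∇u_s| + |∇(u - P_h u)| ≤ M pointwise. Then the quasi-norm satisfies |u - P_h u|²_{(u_s,p,2)} ≤ M^{p-α} C^α h^α, i.e. |u - P_h u|_{(u_s,p,2)} = O(h^{α/2}). -/
import Mathlib


open Real MeasureTheory

/-- Quasi-norm rate for `2 < p < ∞`: with `g = |∇u_s|` and `w = |∇(u - P_h u)|`,
if `‖w‖_{0,α} ≤ C·h` and `g + w ≤ M` pointwise, then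
`∫ (g+w)^{p-2} w² ≤ M^{p-α} C^α h^α`. -/
theorem quasinorm_rate_p_gt_two {Ω : Type*} [MeasurableSpace Ω] (μ : Measure Ω)
    (p α M C h : ℝ) (hp : 2 < p) (hα1 : 1 ≤ α) (hα2 : α ≤ 2)
    (hM : 0 ≤ M) (hC : 0 ≤ C) (hh : 0 ≤ h)
    (g w : Ω → ℝ) (hg : ∀ x, 0 ≤ g x) (hw : ∀ x, 0 ≤ w x)
    (hbdd : ∀ x, g x + w x ≤ M)
    (hint : Integrable (fun x => w x ^ α) μ)
    (hjackson : (∫ x, w x ^ α ∂μ) ^ (1 / α) ≤ C * h) :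
    ∫ x, (g x + w x) ^ (p - 2) * w x ^ (2 : ℝ) ∂μ ≤ M ^ (p - α) * C ^ α * h ^ α := by
  have hα0 : (0 : ℝ) < α := lt_of_lt_of_le one_pos hα1
  have hpα : 0 ≤ p - α := by linarith
  have hgw : ∀ x, 0 ≤ g x + w x := fun x => add_nonneg (hg x) (hw x)
  -- pointwise bound
  have hpt : ∀ x, (g x + w x) ^ (p - 2) * w x ^ (2 : ℝ) ≤ M ^ (p - α) * w x ^ α := by
    intro x
    rcases eq_or_lt_of_le (hw x) with h0 | h0
    · rw [← h0]
      rw [Real.zero_rpow (by norm_num), Real.zero_rpow (ne_of_gt hα0)]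
      simp
    · have hw2 : w x ^ (2 : ℝ) = w x ^ (2 - α) * w x ^ α := by
        rw [← Real.rpow_add h0]; ring_nf
      rw [hw2, ← mul_assoc]
      apply mul_le_mul_of_nonneg_right _ (Real.rpow_nonneg (hw x) α)
      have h1 : w x ^ (2 - α) ≤ (g x + w x) ^ (2 - α) :=
        Real.rpow_le_rpow (hw x) (le_add_of_nonneg_left (hg x)) (by linarith)
      calc (g x + w x) ^ (p - 2) * w x ^ (2 - α)
          ≤ (g x + w x) ^ (p - 2) * (g x + w x) ^ (2 - α) :=
            mul_le_mul_of_nonneg_left h1 (Real.rpow_nonneg (hgw x) _)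
        _ = (g x + w x) ^ (p - α) := by
            rw [← Real.rpow_add' (hgw x) (by ring_nf; linarith)]; ring_nf
        _ ≤ M ^ (p - α) := Real.rpow_le_rpow (hgw x) (hbdd x) hpα
  have hstep1 : ∫ x, (g x + w x) ^ (p - 2) * w x ^ (2 : ℝ) ∂μ
      ≤ ∫ x, M ^ (p - α) * w x ^ α ∂μ := by
    apply integral_mono_of_nonneg
    · filter_upwards with x
      exact mul_nonneg (Real.rpow_nonneg (hgw x) _) (Real.rpow_nonneg (hw x) _)
    · exact hint.const_mul _
    · filter_upwards with x using hpt x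
  have hI0 : 0 ≤ ∫ x, w x ^ α ∂μ :=
    integral_nonneg fun x => Real.rpow_nonneg (hw x) α
  have hstep2 : ∫ x, w x ^ α ∂μ ≤ C ^ α * h ^ α := by
    have := Real.rpow_le_rpow (Real.rpow_nonneg hI0 _) hjackson (le_of_lt hα0)
    rwa [← Real.rpow_mul hI0, one_div,
      inv_mul_cancel₀ (ne_of_gt hα0), Real.rpow_one,
      Real.mul_rpow hC hh] at this
  calc ∫ x, (g x + w x) ^ (p - 2) * w x ^ (2 : ℝ) ∂μ
      ≤ ∫ x, M ^ (p - α) * w x ^ α ∂μ := hstep1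
    _ = M ^ (p - α) * ∫ x, w x ^ α ∂μ := integral_const_mul _ _
    _ ≤ M ^ (p - α) * (C ^ α * h ^ α) :=
        mul_le_mul_of_nonneg_left hstep2 (Real.rpow_nonneg hM _)
    _ = M ^ (p - α) * C ^ α * h ^ α := by ring
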